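/- arXiv:1402.3351 — 2 statements merged into one kernel-verified Lean document; each statement's English description precedes it below -/
import Mathlib

section
/- Let g = k ⊕ p be a Lie algebra with k a subalgebra and p a k-submodule under the adjoint action (i.e. [k,p] ⊆ p), and let g' ⊆ g be a subalgebra with g' = (g'∩k) ⊕ (g'∩p) and g'∩p ≠ 0. Let V be an irreducible g-module such that: (1) as a k-module V decomposes as a direct sum of irreducible k-submodules Vₖ, (2) each Vₖ is irreducible as a (g'∩k)-module, (3) the Vₖ are pairwise non-isomorphic as (g'∩k)-modules, and (4) the k-submodule of p generated by g'∩p equals p. Then V is irreducible as a g'-module. -/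
/-- `W₁` and `W₂` are isomorphic as modules over the set `s` of Lie algebra elements:
there is a linear equivalence intertwining the action of every element of `s`. -/
def IsoAsModules {K L V : Type*} [Field K] [LieRing L] [LieAlgebra K L]
    [AddCommGroup V] [Module K V] [LieRingModule L V] [LieModule K L V]
    (s : Set L) (W₁ W₂ : Submodule K V) : Prop :=
  ∃ e : W₁ ≃ₗ[K] W₂, ∀ x ∈ s, ∀ v w : W₁,
    ⁅x, (v : V)⁆ = (w : V) → ⁅x, ((e v : W₂) : V)⁆ = ((e w : W₂) : V)

/-!
Let `s = g' ∩ k`. An `s`-stable subspace of `V` is a module over the associative algebra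
generated by the action of `s`, and over that algebra `V = ⨁ Wᵢ` is semisimple with simple,
pairwise non-isomorphic summands. Each `Wᵢ` is therefore a whole isotypic component, so every
simple submodule of `V` is one of the `Wᵢ`, and every `s`-stable subspace `U` is a sum of some
of the `Wᵢ`. In particular a `g'`-stable `U` is `k`-stable. Its stabilizer in `g` is a Lie
subalgebra containing `k` and `g' ∩ p`, hence containing the `k`-submodule `p` generated by
`g' ∩ p`, hence all of `g = k ⊕ p`; irreducibility of `V` over `g` finishes the proof.
-/

namespace Submodule

variable {R M ι : Type*} [Ring R] [AddCommGroup M] [Module R M] {W : ι → Submodule R M}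
  [∀ i, IsSimpleModule R (W i)]

/-- The isotypic components are independent and each contains the corresponding `W i`; since the
`W i` already span `M`, modularity forces equality. -/
theorem isotypicComponent_eq_of_iSup_eq_top (hW : ∀ i j, Nonempty (W i ≃ₗ[R] W j) → i = j)
    (htop : iSup W = ⊤) (i : ι) : isotypicComponent R M (W i) = W i := by
  have hC : ∀ j, isotypicComponent R M (W j) ∈ isotypicComponents R M :=
    fun j => ⟨W j, inferInstance, rfl⟩
  have hCne : ∀ j, j ≠ i → isotypicComponent R M (W j) ≠ isotypicComponent R M (W i) :=
    fun j hji hC => hji <| hW _ _ <| isIsotypicOfType_submodule_iff.mp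
      (.isotypicComponent R M (W i)) (W j) (hC ▸ (W j).le_isotypicComponent)
  have hdisj : Disjoint (isotypicComponent R M (W i)) (⨆ (j) (_ : j ≠ i), W j) :=
    (sSupIndep_isotypicComponents R M (hC i)).mono_right <| iSup₂_le fun j hji =>
      (W j).le_isotypicComponent.trans (le_sSup (Set.mem_sdiff_singleton.mpr ⟨hC j, hCne j hji⟩))
  calc isotypicComponent R M (W i)
      = (W i ⊔ ⨆ (j) (_ : j ≠ i), W j) ⊓ isotypicComponent R M (W i) := by
        rw [← iSup_split_single W i, htop, top_inf_eq]
    _ = W i ⊔ (⨆ (j) (_ : j ≠ i), W j) ⊓ isotypicComponent R M (W i) :=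
        sup_inf_assoc_of_le _ (W i).le_isotypicComponent
    _ = W i := by rw [hdisj.symm.eq_bot, sup_bot_eq]

theorem mem_range_of_iSup_eq_top (hW : ∀ i j, Nonempty (W i ≃ₗ[R] W j) → i = j)
    (htop : iSup W = ⊤) (S : Submodule R M) [IsSimpleModule R S] : S ∈ Set.range W := by
  have : ∀ m : Set.range W, IsSimpleModule R m := by rintro ⟨_, i, rfl⟩; infer_instance
  obtain ⟨_, ⟨i, rfl⟩, ⟨e⟩⟩ :=
    S.linearEquiv_of_le_sSup (Set.range W) (by rw [sSup_range, htop]; exact le_top)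
  have hle : S ≤ W i := by
    rw [← isotypicComponent_eq_of_iSup_eq_top hW htop i, ← e.isotypicComponent_eq]
    exact S.le_isotypicComponent
  have hWi : IsAtom (W i) := isSimpleModule_iff_isAtom.mp inferInstance
  exact ⟨i, ((hWi.le_iff_eq (isSimpleModule_iff_isAtom.mp ‹_›).1).mp hle).symm⟩

theorem exists_subset_range_eq_sSup_of_iSup_eq_top
    (hW : ∀ i j, Nonempty (W i ≃ₗ[R] W j) → i = j) (htop : iSup W = ⊤) (U : Submodule R M) :
    ∃ 𝒮 ⊆ Set.range W, U = sSup 𝒮 := by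
  have := isSemisimpleModule_of_isSemisimpleModule_submodule' (p := W) (fun _ => inferInstance) htop
  refine ⟨_, fun S hS => ?_, (IsSemisimpleModule.sSup_simples_le U).symm⟩
  have : IsSimpleModule R S := hS.1
  exact mem_range_of_iSup_eq_top hW htop S

end Submodule

section

variable {K L V : Type*} [Field K] [LieRing L] [LieAlgebra K L]
  [AddCommGroup V] [Module K V] [LieRingModule L V] [LieModule K L V]

namespace Submodule

variable (L) in
def lieStabilizer (U : Submodule K V) : LieSubalgebra K L where
  carrier := {x | ∀ v ∈ U, ⁅x, v⁆ ∈ U}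
  add_mem' hx hy v hv := by rw [add_lie]; exact U.add_mem (hx v hv) (hy v hv)
  zero_mem' v _ := by rw [zero_lie]; exact U.zero_mem
  smul_mem' c x hx v hv := by rw [smul_lie]; exact U.smul_mem c (hx v hv)
  lie_mem' hx hy v hv := by rw [lie_lie]; exact U.sub_mem (hx _ (hy v hv)) (hy _ (hx v hv))

theorem le_lieStabilizer_sSup {H : LieSubalgebra K L} {𝒮 : Set (Submodule K V)}
    (h : ∀ N ∈ 𝒮, H ≤ N.lieStabilizer L) : H ≤ (sSup 𝒮).lieStabilizer L := fun x hx _ hv =>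
  (sSup_le fun N hN w hw => le_sSup hN (h N hN hx w hw) :
    sSup 𝒮 ≤ (sSup 𝒮).comap (LieModule.toEnd K L V x)) hv

end Submodule

namespace LieModule

variable (K V) in
/-- `s`-stable subspaces of `V` are exactly the submodules over this algebra, which lets the
isotypic theory of semisimple modules apply to modules over a mere set of Lie algebra elements. -/
abbrev actionAlgebra (s : Set L) : Subalgebra K (Module.End K V) :=
  Algebra.adjoin K (toEnd K L V '' s)

variable {s : Set L}

theorem subset_lieStabilizer_restrictScalars (N : Submodule (actionAlgebra K V s) V) :
    s ⊆ (N.restrictScalars K).lieStabilizer L := fun x hx _ hv =>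
  N.smul_mem ⟨toEnd K L V x, Algebra.subset_adjoin ⟨x, hx, rfl⟩⟩ hv

theorem exists_restrictScalars_eq {U : Submodule K V} (hU : s ⊆ U.lieStabilizer L) :
    ∃ N : Submodule (actionAlgebra K V s) V, N.restrictScalars K = U := by
  have hmaps : ∀ f ∈ actionAlgebra K V s, ∀ v ∈ U, f v ∈ U := fun f hf => by
    induction hf using Algebra.adjoin_induction with
    | mem f hf => obtain ⟨x, hx, rfl⟩ := hf; exact hU hx
    | algebraMap c => exact fun v hv => U.smul_mem c hv
    | add f g _ _ hf hg => exact fun v hv => U.add_mem (hf v hv) (hg v hv)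
    | mul f g _ _ hf hg => exact fun v hv => hf _ (hg v hv)
  exact ⟨{ U with smul_mem' := fun f v hv => hmaps f f.2 v hv }, rfl⟩

theorem isoAsModules_restrictScalars {N₁ N₂ : Submodule (actionAlgebra K V s) V}
    (e : N₁ ≃ₗ[actionAlgebra K V s] N₂) :
    IsoAsModules s (N₁.restrictScalars K) (N₂.restrictScalars K) := by
  refine ⟨(((N₁.restrictScalarsEquiv K _ _).trans e).trans
    (N₂.restrictScalarsEquiv K _ _).symm).restrictScalars K, fun x hx v w hvw => ?_⟩
  let a : actionAlgebra K V s := ⟨toEnd K L V x, Algebra.subset_adjoin ⟨x, hx, rfl⟩⟩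
  have h := congrArg Subtype.val (e.map_smul a ⟨v, v.2⟩)
  show ⁅x, (e ⟨v, v.2⟩ : V)⁆ = (e ⟨w, w.2⟩ : V)
  convert h.symm using 3
  · rfl
  · exact Subtype.ext (by exact hvw.symm)

theorem isSimpleModule_of_restrictScalars (N : Submodule (actionAlgebra K V s) V)
    (hne : N.restrictScalars K ≠ ⊥)
    (hirr : ∀ U ≤ N.restrictScalars K, s ⊆ U.lieStabilizer L → U = ⊥ ∨ U = N.restrictScalars K) :
    IsSimpleModule (actionAlgebra K V s) N := by
  refine isSimpleModule_iff_isAtom.mpr ⟨fun h => hne (by rw [h]; rfl), fun N' hN' => ?_⟩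
  rcases hirr _ (Submodule.restrictScalars_mono K hN'.le)
    (subset_lieStabilizer_restrictScalars N') with h | h
  · exact (Submodule.restrictScalars_eq_bot_iff K _ _).mp h
  · exact absurd (Submodule.restrictScalars_injective K _ _ h) hN'.ne

theorem exists_subset_range_eq_sSup_of_subset_lieStabilizer {ι : Type*}
    {W : ι → Submodule K V} (htop : iSup W = ⊤) (hstab : ∀ i, s ⊆ (W i).lieStabilizer L)
    (hne : ∀ i, W i ≠ ⊥) (hirr : ∀ i, ∀ U ≤ W i, s ⊆ U.lieStabilizer L → U = ⊥ ∨ U = W i)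
    (hiso : ∀ i j, IsoAsModules s (W i) (W j) → i = j)
    {U : Submodule K V} (hU : s ⊆ U.lieStabilizer L) : ∃ 𝒮 ⊆ Set.range W, U = sSup 𝒮 := by
  choose W' hW' using fun i => exists_restrictScalars_eq (hstab i)
  obtain rfl : W = fun i => (W' i).restrictScalars K := funext fun i => (hW' i).symm
  obtain ⟨U', rfl⟩ := exists_restrictScalars_eq hU
  have (i : ι) : IsSimpleModule (actionAlgebra K V s) (W' i) :=
    isSimpleModule_of_restrictScalars _ (hne i) (hirr i)
  obtain ⟨𝒮, h𝒮, rfl⟩ := Submodule.exists_subset_range_eq_sSup_of_iSup_eq_top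
    (fun i j ⟨e⟩ => hiso i j (isoAsModules_restrictScalars e))
    (Submodule.restrictScalars_injective K _ _ (by simpa using htop)) U'
  refine ⟨Submodule.restrictScalars K '' 𝒮, ?_, Submodule.restrictScalars_sSup K 𝒮⟩
  rintro _ ⟨N, hN, rfl⟩
  obtain ⟨i, rfl⟩ := h𝒮 hN
  exact ⟨i, rfl⟩

end LieModule

theorem LieSubalgebra.eq_top_of_le_of_generates {k H : LieSubalgebra K L} {p q₀ : Submodule K L}
    (hkp : ∀ x ∈ k, ∀ y ∈ p, ⁅x, y⁆ ∈ p) (hsup : k.toSubmodule ⊔ p = ⊤)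
    (hgen : ∀ q : Submodule K L, q ≤ p → q₀ ≤ q → (∀ x ∈ k, ∀ y ∈ q, ⁅x, y⁆ ∈ q) → p ≤ q)
    (hk : k ≤ H) (hq₀ : q₀ ≤ p ⊓ H.toSubmodule) : H = ⊤ := by
  have hp : p ≤ H.toSubmodule := le_inf_iff.mp (hgen (p ⊓ H.toSubmodule) inf_le_left hq₀
    fun x hx y hy => ⟨hkp x hx y hy.1, H.lie_mem (hk hx) hy.2⟩) |>.2
  rw [← LieSubalgebra.toSubmodule_eq_top, eq_top_iff, ← hsup]
  exact sup_le hk hp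

end

open scoped DirectSum in
theorem statement_1_general {K : Type*} [Field K]
    {L V : Type*} [LieRing L] [LieAlgebra K L]
    [AddCommGroup V] [Module K V] [LieRingModule L V] [LieModule K L V]
    (k : LieSubalgebra K L) (p : Submodule K L)
    (hkp : ∀ x ∈ k, ∀ y ∈ p, ⁅x, y⁆ ∈ p)
    (hdec : IsCompl k.toSubmodule p)
    (g' : LieSubalgebra K L)
    {ι : Type*} [DecidableEq ι] (W : ι → Submodule K V)
    (hinternal : DirectSum.IsInternal W)
    (hkinv : ∀ i, ∀ x ∈ k, ∀ v ∈ W i, ⁅x, v⁆ ∈ W i)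
    (hirr_k : ∀ i, W i ≠ ⊥ ∧
      ∀ U ≤ W i, (∀ x ∈ k, ∀ v ∈ U, ⁅x, v⁆ ∈ U) → U = ⊥ ∨ U = W i)
    (hirr_g'k : ∀ i, ∀ U ≤ W i,
      (∀ x ∈ (g' : Set L) ∩ (k : Set L), ∀ v ∈ U, ⁅x, v⁆ ∈ U) → U = ⊥ ∨ U = W i)
    (hnoniso : ∀ i j, i ≠ j → ¬ IsoAsModules ((g' : Set L) ∩ (k : Set L)) (W i) (W j))
    (hgen : ∀ q : Submodule K L, q ≤ p → g'.toSubmodule ⊓ p ≤ q →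
      (∀ x ∈ k, ∀ y ∈ q, ⁅x, y⁆ ∈ q) → p ≤ q)
    (hVirr : ∀ U : Submodule K V, (∀ x : L, ∀ v ∈ U, ⁅x, v⁆ ∈ U) → U = ⊥ ∨ U = ⊤) :
    ∀ U : Submodule K V, (∀ x ∈ g', ∀ v ∈ U, ⁅x, v⁆ ∈ U) → U = ⊥ ∨ U = ⊤ := by
  intro U hU
  obtain ⟨𝒮, h𝒮, rfl⟩ := LieModule.exists_subset_range_eq_sSup_of_subset_lieStabilizer
    (s := (g' : Set L) ∩ k) hinternal.submodule_iSup_eq_top (fun i _ hx => hkinv i _ hx.2)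
    (fun i => (hirr_k i).1) hirr_g'k (fun i j h => by_contra fun hij => hnoniso i j hij h)
    (fun _ hx => hU _ hx.1)
  have hk : k ≤ (sSup 𝒮).lieStabilizer L := Submodule.le_lieStabilizer_sSup fun N hN => by
    obtain ⟨i, rfl⟩ := h𝒮 hN
    exact hkinv i
  have htop : (sSup 𝒮).lieStabilizer L = ⊤ :=
    LieSubalgebra.eq_top_of_le_of_generates hkp hdec.sup_eq_top hgen hk
      (le_inf inf_le_right (inf_le_left.trans fun x hx => hU x hx))
  exact hVirr _ fun x => htop.ge (LieSubalgebra.mem_top x)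

/-- Let `g = k ⊕ p` with `k` a subalgebra and `[k,p] ⊆ p`, and let
`g' ⊆ g` be a subalgebra with `g' = (g'∩k) ⊕ (g'∩p)` and `g'∩p ≠ 0`.  Let `V` be an
irreducible `g`-module decomposing as a direct sum of `k`-irreducible submodules `Wᵢ`
which are irreducible and pairwise non-isomorphic as `(g'∩k)`-modules, and such that the
`k`-submodule of `p` generated by `g'∩p` is `p`.  Then `V` is irreducible over `g'`. -/
theorem statement_1 {K : Type*} [Field K] [CharZero K]
    {L V : Type*} [LieRing L] [LieAlgebra K L]
    [AddCommGroup V] [Module K V] [LieRingModule L V] [LieModule K L V]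
    (k : LieSubalgebra K L) (p : Submodule K L)
    (hkp : ∀ x ∈ k, ∀ y ∈ p, ⁅x, y⁆ ∈ p)
    (hdec : IsCompl k.toSubmodule p)
    (g' : LieSubalgebra K L)
    (hg'dec : g'.toSubmodule = g'.toSubmodule ⊓ k.toSubmodule ⊔ g'.toSubmodule ⊓ p)
    (hg'p : g'.toSubmodule ⊓ p ≠ ⊥)
    {ι : Type*} [DecidableEq ι] (W : ι → Submodule K V)
    (hinternal : DirectSum.IsInternal W)
    (hkinv : ∀ i, ∀ x ∈ k, ∀ v ∈ W i, ⁅x, v⁆ ∈ W i)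
    (hirr_k : ∀ i, W i ≠ ⊥ ∧
      ∀ U ≤ W i, (∀ x ∈ k, ∀ v ∈ U, ⁅x, v⁆ ∈ U) → U = ⊥ ∨ U = W i)
    (hirr_g'k : ∀ i, ∀ U ≤ W i,
      (∀ x ∈ (g' : Set L) ∩ (k : Set L), ∀ v ∈ U, ⁅x, v⁆ ∈ U) → U = ⊥ ∨ U = W i)
    (hnoniso : ∀ i j, i ≠ j → ¬ IsoAsModules ((g' : Set L) ∩ (k : Set L)) (W i) (W j))
    (hgen : ∀ q : Submodule K L, q ≤ p → g'.toSubmodule ⊓ p ≤ q →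
      (∀ x ∈ k, ∀ y ∈ q, ⁅x, y⁆ ∈ q) → p ≤ q)
    (hVnt : Nontrivial V)
    (hVirr : ∀ U : Submodule K V, (∀ x : L, ∀ v ∈ U, ⁅x, v⁆ ∈ U) → U = ⊥ ∨ U = ⊤) :
    ∀ U : Submodule K V, (∀ x ∈ g', ∀ v ∈ U, ⁅x, v⁆ ∈ U) → U = ⊥ ∨ U = ⊤ :=
  statement_1_general k p hkp hdec g' W hinternal hkinv hirr_k hirr_g'k hnoniso hgen hVirr
end

section
/- In the setting of a holomorphic pair: let g = k ⊕ p₊ ⊕ p₋ and g' = k' ⊕ p'₊ ⊕ p'₋ be Lie algebras with g' ⊆ g, k' ⊆ k, p'₊ = g' ∩ p₊, p'₋ = g' ∩ p₋, with an element z' ∈ k' ∩ center of k such that ad(z') = ±1 on p_± and 0 on k. Let V be an irreducible g-module on which z' acts semisimply, generated by V₀ = V^{p₋}, with z' acting on V₀ by the scalar a₀. Then for all n ≥ 0, Uₙ(g)·V₀ ∩ U(g')·V₀ = Uₙ(g')·V₀. -/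
/-!
Since `k` normalizes `p₊`, `⁅p₋, p₊⁆ ⊆ k` (it is killed by `ad z'`), `k` preserves `V₀` and `p₋`
kills it, every factor from `k ⊕ p₋` can be pushed through the factors from `p₊` without raising
the degree: `Uₙ(g)·V₀ = Uₙ(p₊)·V₀`, and likewise `Uₙ(g')·V₀ = Uₙ(p'₊)·V₀`. Each factor from `p₊`
raises the `z'`-eigenvalue by one, so `Uₙ(p₊)·V₀ ⊆ ⊕_{k ≤ n} V(a₀ + k)` while `U(g')·V₀` is the
sum of the pieces `V(a₀ + k) ∩ U_k(p'₊)·V₀`. Independence of the eigenspaces then forces a vector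
of `Uₙ(g)·V₀ ∩ U(g')·V₀` to have no components of degree `> n`, i.e. to lie in `Uₙ(p'₊)·V₀`.
-/

/-- The filtration `Uₙ(s)·X₀`: `F 0 = X₀`, `F (n+1) = F n + span { x·v : x ∈ s, v ∈ F n }`. -/
def envFilt {K L V : Type*} [Field K] [LieRing L] [LieAlgebra K L]
    [AddCommGroup V] [Module K V] [LieRingModule L V] [LieModule K L V]
    (s : Set L) (X0 : Submodule K V) : ℕ → Submodule K V
  | 0 => X0
  | n + 1 => envFilt s X0 n ⊔
      Submodule.span K {w : V | ∃ x ∈ s, ∃ v ∈ envFilt s X0 n, w = ⁅x, v⁆}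

/-- The eigenspace `V(a) = {v ∈ V : z·v = a v}` of the action of `z`. -/
def lieEig {K L V : Type*} [Field K] [LieRing L] [LieAlgebra K L]
    [AddCommGroup V] [Module K V] [LieRingModule L V] [LieModule K L V]
    (z : L) (a : K) : Submodule K V where
  carrier := {v | ⁅z, v⁆ = a • v}
  add_mem' := by
    intro u v hu hv
    simp only [Set.mem_setOf_eq] at *
    rw [lie_add, hu, hv, smul_add]
  zero_mem' := by simp
  smul_mem' := by
    intro c v hv
    simp only [Set.mem_setOf_eq] at *
    rw [lie_smul, hv, smul_comm]

/-- The subspace of vectors annihilated by every element of `s ⊆ L`. -/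
def annihilatedBy {K L V : Type*} [Field K] [LieRing L] [LieAlgebra K L]
    [AddCommGroup V] [Module K V] [LieRingModule L V] [LieModule K L V]
    (s : Set L) : Submodule K V where
  carrier := {v | ∀ x ∈ s, ⁅x, v⁆ = 0}
  add_mem' := by
    intro u v hu hv x hx
    rw [lie_add, hu x hx, hv x hx, add_zero]
  zero_mem' := by
    intro x _
    exact lie_zero x
  smul_mem' := by
    intro c v hv x hx
    rw [lie_smul, hv x hx, smul_zero]

section Filtration

variable {K L V : Type*} [Field K] [LieRing L] [LieAlgebra K L]
    [AddCommGroup V] [Module K V] [LieRingModule L V] [LieModule K L V]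
    {s t : Set L} {X0 : Submodule K V}

lemma envFilt_le_succ (n : ℕ) : envFilt s X0 n ≤ envFilt s X0 (n + 1) := le_sup_left

lemma envFilt_monotone : Monotone (envFilt s X0) :=
  monotone_nat_of_le_succ envFilt_le_succ

lemma lie_mem_envFilt_succ {n : ℕ} {x : L} {v : V} (hx : x ∈ s) (hv : v ∈ envFilt s X0 n) :
    ⁅x, v⁆ ∈ envFilt s X0 (n + 1) :=
  Submodule.mem_sup_right (Submodule.subset_span ⟨x, hx, v, hv, rfl⟩)

lemma envFilt_succ_le {n : ℕ} {M : Submodule K V} (h : envFilt s X0 n ≤ M)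
    (hlie : ∀ x ∈ s, ∀ v ∈ envFilt s X0 n, ⁅x, v⁆ ∈ M) : envFilt s X0 (n + 1) ≤ M :=
  sup_le h <| Submodule.span_le.2 <| by
    rintro w ⟨x, hx, v, hv, rfl⟩
    exact hlie x hx v hv

lemma envFilt_mono_of_subset (hst : s ⊆ t) (n : ℕ) : envFilt s X0 n ≤ envFilt t X0 n := by
  induction n with
  | zero => exact le_rfl
  | succ n ih =>
    refine envFilt_succ_le (ih.trans (envFilt_le_succ n)) fun x hx v hv => ?_
    exact lie_mem_envFilt_succ (hst hx) (ih hv)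

lemma lie_mem_envFilt_of_lie_mem {x : L} (hX0 : ∀ v ∈ X0, ⁅x, v⁆ ∈ X0)
    (hs : ∀ y ∈ s, ∀ n, ∀ v ∈ envFilt s X0 n, ⁅⁅x, y⁆, v⁆ ∈ envFilt s X0 (n + 1)) :
    ∀ n, ∀ v ∈ envFilt s X0 n, ⁅x, v⁆ ∈ envFilt s X0 n := by
  intro n
  induction n with
  | zero => exact hX0
  | succ n ih =>
    suffices envFilt s X0 (n + 1) ≤ (envFilt s X0 (n + 1)).comap (LieModule.toEnd K L V x) from
      fun v hv => this hv
    refine envFilt_succ_le (fun v hv => envFilt_le_succ n (ih v hv)) fun y hy v hv => ?_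
    rw [Submodule.mem_comap, LieModule.toEnd_apply_apply, leibniz_lie]
    exact add_mem (hs y hy n v hv) (lie_mem_envFilt_succ hy (ih v hv))

theorem envFilt_eq_envFilt_of_triangular {A B C : Set L} (hBs : B ⊆ s)
    (hs : ∀ x ∈ s, ∃ a ∈ A, ∃ b ∈ B, ∃ c ∈ C, x = a + b + c)
    (hAX0 : ∀ a ∈ A, ∀ v ∈ X0, ⁅a, v⁆ ∈ X0) (hCX0 : ∀ c ∈ C, ∀ v ∈ X0, ⁅c, v⁆ = 0)
    (hAB : ∀ a ∈ A, ∀ b ∈ B, ⁅a, b⁆ ∈ B) (hCB : ∀ c ∈ C, ∀ b ∈ B, ⁅c, b⁆ ∈ A) (n : ℕ) :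
    envFilt s X0 n = envFilt B X0 n := by
  have hA : ∀ a ∈ A, ∀ n, ∀ v ∈ envFilt B X0 n, ⁅a, v⁆ ∈ envFilt B X0 n := fun a ha =>
    lie_mem_envFilt_of_lie_mem (hAX0 a ha) fun b hb _ _ hv =>
      lie_mem_envFilt_succ (hAB a ha b hb) hv
  have hC : ∀ c ∈ C, ∀ n, ∀ v ∈ envFilt B X0 n, ⁅c, v⁆ ∈ envFilt B X0 n := fun c hc =>
    lie_mem_envFilt_of_lie_mem (fun v hv => (hCX0 c hc v hv).symm ▸ X0.zero_mem)
      fun b hb n v hv => hA _ (hCB c hc b hb) (n + 1) v (envFilt_le_succ n hv)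
  induction n with
  | zero => rfl
  | succ n ih =>
    refine le_antisymm ?_ (envFilt_mono_of_subset hBs _)
    refine envFilt_succ_le (ih.le.trans (envFilt_le_succ n)) fun x hx v hv => ?_
    rw [ih] at hv
    obtain ⟨a, ha, b, hb, c, hc, rfl⟩ := hs x hx
    rw [add_lie, add_lie]
    exact add_mem (add_mem (envFilt_le_succ n (hA a ha n v hv)) (lie_mem_envFilt_succ hb hv))
      (envFilt_le_succ n (hC c hc n v hv))

end Filtration

theorem iSupIndep.iSup_inf_inf_biSup {ι α : Type*} [CompleteLattice α] [IsCompactlyGenerated α]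
    [IsModularLattice α] {W Q : ι → α} (hW : iSupIndep W) (S : Set ι) :
    (⨆ i, W i ⊓ Q i) ⊓ ⨆ i ∈ S, W i = ⨆ i ∈ S, W i ⊓ Q i := by
  have hout : (⨆ i ∈ Sᶜ, W i ⊓ Q i) ⊓ ⨆ i ∈ S, W i = ⊥ :=
    ((hW.disjoint_biSup_biSup disjoint_compl_left).mono_left
      (iSup₂_mono fun _ _ => inf_le_left)).eq_bot
  rw [iSup_split _ (· ∈ S), sup_inf_assoc_of_le _ (iSup₂_mono fun _ _ => inf_le_left)]
  exact (congrArg _ hout).trans (sup_bot_eq _)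

section Grading

variable {K L V : Type*} [Field K] [LieRing L] [LieAlgebra K L]
    [AddCommGroup V] [Module K V] [LieRingModule L V] [LieModule K L V]

lemma lieEig_eq_eigenspace (z : L) (a : K) :
    (lieEig z a : Submodule K V) = (LieModule.toEnd K L V z).eigenspace a := by
  ext v
  rw [Module.End.mem_eigenspace_iff]
  rfl

lemma iSupIndep_lieEig_add_natCast [CharZero K] (z : L) (a₀ : K) :
    iSupIndep fun k : ℕ => (lieEig z (a₀ + k) : Submodule K V) := by
  simp only [lieEig_eq_eigenspace]
  exact (Module.End.eigenspaces_iSupIndep _).comp fun m n h => by simpa using h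

lemma lie_mem_lieEig_add_one {z x : L} {a : K} {v : V} (hx : ⁅z, x⁆ = x)
    (hv : v ∈ (lieEig z a : Submodule K V)) : ⁅x, v⁆ ∈ (lieEig z (a + 1) : Submodule K V) := by
  change ⁅z, ⁅x, v⁆⁆ = (a + 1) • ⁅x, v⁆
  rw [leibniz_lie, hx, show ⁅z, v⁆ = a • v from hv, lie_smul, add_smul, one_smul, add_comm]

variable {s t : Set L} {X0 : Submodule K V} {z : L} {a₀ : K}

lemma envFilt_le_iSup_lieEig_inf (hs : ∀ x ∈ s, ⁅z, x⁆ = x) (hX0 : X0 ≤ lieEig z a₀) (n : ℕ) :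
    envFilt s X0 n ≤ ⨆ k ∈ Set.Iic n, lieEig z (a₀ + k) ⊓ envFilt s X0 k := by
  induction n with
  | zero =>
    intro v hv
    refine Submodule.mem_iSup_of_mem 0 (Submodule.mem_iSup_of_mem (Set.mem_Iic.2 le_rfl) ⟨?_, hv⟩)
    simpa using hX0 hv
  | succ n ih =>
    refine envFilt_succ_le (ih.trans (biSup_mono fun k hk => Nat.le_succ_of_le hk))
      fun x hx v hv => ?_
    suffices h : (⨆ k ∈ Set.Iic n, lieEig z (a₀ + k) ⊓ envFilt s X0 k) ≤
        (⨆ k ∈ Set.Iic (n + 1), lieEig z (a₀ + k) ⊓ envFilt s X0 k).comap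
          (LieModule.toEnd K L V x) from h (ih hv)
    refine iSup₂_le fun k hk w hw => Submodule.mem_iSup_of_mem (k + 1) <|
      Submodule.mem_iSup_of_mem (Nat.succ_le_succ hk) ⟨?_, lie_mem_envFilt_succ hx hw.2⟩
    rw [Nat.cast_succ, ← add_assoc]
    exact lie_mem_lieEig_add_one (hs x hx) hw.1

theorem envFilt_inf_iSup_envFilt_of_subset [CharZero K] (hts : t ⊆ s)
    (hs : ∀ x ∈ s, ⁅z, x⁆ = x) (hX0 : X0 ≤ lieEig z a₀) (n : ℕ) :
    envFilt s X0 n ⊓ ⨆ m, envFilt t X0 m = envFilt t X0 n := by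
  let W : ℕ → Submodule K V := fun k => lieEig z (a₀ + k)
  refine le_antisymm ?_ (le_inf (envFilt_mono_of_subset hts n) (le_iSup (envFilt t X0) n))
  calc envFilt s X0 n ⊓ ⨆ m, envFilt t X0 m
      ≤ (⨆ k, W k ⊓ envFilt t X0 k) ⊓ ⨆ k ∈ Set.Iic n, W k := by
        rw [inf_comm]
        refine inf_le_inf (iSup_le fun m => ?_) ?_
        · exact (envFilt_le_iSup_lieEig_inf (fun x hx => hs x (hts hx)) hX0 m).trans
            (iSup₂_le fun k _ => le_iSup (fun k => W k ⊓ envFilt t X0 k) k)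
        · exact (envFilt_le_iSup_lieEig_inf hs hX0 n).trans (iSup₂_mono fun _ _ => inf_le_left)
    _ = ⨆ k ∈ Set.Iic n, W k ⊓ envFilt t X0 k :=
        (iSupIndep_lieEig_add_natCast z a₀).iSup_inf_inf_biSup _
    _ ≤ envFilt t X0 n := iSup₂_le fun _ hk => inf_le_right.trans (envFilt_monotone hk)

end Grading

lemma exists_add_add_of_mem_sup_sup {R M : Type*} [Semiring R] [AddCommMonoid M] [Module R M]
    {A B C : Submodule R M} {x : M} (hx : x ∈ A ⊔ B ⊔ C) :
    ∃ a ∈ A, ∃ b ∈ B, ∃ c ∈ C, x = a + b + c := by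
  obtain ⟨y, hy, c, hc, rfl⟩ := Submodule.mem_sup.1 hx
  obtain ⟨a, ha, b, hb, rfl⟩ := Submodule.mem_sup.1 hy
  exact ⟨a, ha, b, hb, c, hc, rfl⟩

section Holomorphic

variable {K L V : Type*} [Field K] [LieRing L] [LieAlgebra K L]
    [AddCommGroup V] [Module K V] [LieRingModule L V] [LieModule K L V]

lemma lie_mem_annihilatedBy {C : Submodule K L} {x : L} (hx : ∀ c ∈ C, ⁅x, c⁆ ∈ C) {v : V}
    (hv : v ∈ (annihilatedBy (C : Set L) : Submodule K V)) :
    ⁅x, v⁆ ∈ (annihilatedBy (C : Set L) : Submodule K V) := by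
  intro c hc
  rw [leibniz_lie, hv c hc, lie_zero, add_zero, ← lie_skew]
  exact hv _ (C.neg_mem (hx c hc))

variable [CharZero K] {kk pp pm : Submodule K L} {z : L}

lemma mem_of_lie_eq_zero (hspan : kk ⊔ pp ⊔ pm = ⊤) (hadk : ∀ x ∈ kk, ⁅z, x⁆ = 0)
    (hadp : ∀ x ∈ pp, ⁅z, x⁆ = x) (hadm : ∀ x ∈ pm, ⁅z, x⁆ = -x) {w : L} (hw : ⁅z, w⁆ = 0) :
    w ∈ kk := by
  obtain ⟨a, ha, b, hb, c, hc, rfl⟩ :=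
    exists_add_add_of_mem_sup_sup (hspan ▸ Submodule.mem_top : w ∈ kk ⊔ pp ⊔ pm)
  rw [lie_add, lie_add, hadk a ha, hadp b hb, hadm c hc, zero_add, ← sub_eq_add_neg,
    sub_eq_zero] at hw
  subst hw
  have hb0 : (2 : K) • b = 0 := by
    rw [two_smul]
    nth_rewrite 1 [← hadp b hb]
    rw [hadm b hc, neg_add_cancel]
  rw [(smul_eq_zero.1 hb0).resolve_left two_ne_zero, add_zero, add_zero]
  exact ha

lemma lie_mem_of_mem_neg_of_mem_pos (hspan : kk ⊔ pp ⊔ pm = ⊤) (hadk : ∀ x ∈ kk, ⁅z, x⁆ = 0)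
    (hadp : ∀ x ∈ pp, ⁅z, x⁆ = x) (hadm : ∀ x ∈ pm, ⁅z, x⁆ = -x) {y x : L} (hy : y ∈ pm)
    (hx : x ∈ pp) : ⁅y, x⁆ ∈ kk :=
  mem_of_lie_eq_zero hspan hadk hadp hadm <| by
    rw [leibniz_lie, hadm y hy, hadp x hx, neg_lie, neg_add_cancel]

end Holomorphic

theorem statement_14_general {L V : Type*} [LieRing L] [LieAlgebra ℂ L]
    [AddCommGroup V] [Module ℂ V] [LieRingModule L V] [LieModule ℂ L V]
    (kk pp pm : Submodule ℂ L)
    (hdec : DirectSum.IsInternal (fun i : Fin 3 => ![kk, pp, pm] i))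
    (hkpp : ∀ x ∈ kk, ∀ y ∈ pp, ⁅x, y⁆ ∈ pp)
    (hkpm : ∀ x ∈ kk, ∀ y ∈ pm, ⁅x, y⁆ ∈ pm)
    (g' : LieSubalgebra ℂ L)
    (hg'dec : g'.toSubmodule =
      g'.toSubmodule ⊓ kk ⊔ g'.toSubmodule ⊓ pp ⊔ g'.toSubmodule ⊓ pm)
    (z' : L)
    (hadk : ∀ x ∈ kk, ⁅z', x⁆ = 0)
    (hadp : ∀ x ∈ pp, ⁅z', x⁆ = x)
    (hadm : ∀ x ∈ pm, ⁅z', x⁆ = -x)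
    (a₀ : ℂ)
    (hscal : ∀ v ∈ (annihilatedBy (pm : Set L) : Submodule ℂ V), ⁅z', v⁆ = a₀ • v) :
    ∀ n : ℕ,
      envFilt (Set.univ : Set L) (annihilatedBy (pm : Set L) : Submodule ℂ V) n ⊓
          (⨆ m : ℕ, envFilt (g' : Set L) (annihilatedBy (pm : Set L) : Submodule ℂ V) m)
        = envFilt (g' : Set L) (annihilatedBy (pm : Set L) : Submodule ℂ V) n := by
  have hspan : kk ⊔ pp ⊔ pm = ⊤ := by simpa using hdec.submodule_iSup_eq_top
  have hpm_pp : ∀ y ∈ pm, ∀ x ∈ pp, ⁅y, x⁆ ∈ kk := fun y hy x hx =>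
    lie_mem_of_mem_neg_of_mem_pos hspan hadk hadp hadm hy hx
  have hkk_V₀ : ∀ x ∈ kk, ∀ v ∈ (annihilatedBy (pm : Set L) : Submodule ℂ V),
      ⁅x, v⁆ ∈ (annihilatedBy (pm : Set L) : Submodule ℂ V) := fun x hx _ =>
    lie_mem_annihilatedBy (hkpm x hx)
  have hg'_span : ∀ x ∈ (g' : Set L), ∃ a ∈ (g' : Set L) ∩ kk, ∃ b ∈ (g' : Set L) ∩ pp,
      ∃ c ∈ (g' : Set L) ∩ pm, x = a + b + c := fun x hx => by
    rw [SetLike.mem_coe, ← LieSubalgebra.mem_toSubmodule, hg'dec] at hx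
    exact exists_add_add_of_mem_sup_sup hx
  have hg_filt := envFilt_eq_envFilt_of_triangular (X0 := annihilatedBy (pm : Set L))
    (Set.subset_univ _)
    (fun x _ => exists_add_add_of_mem_sup_sup (hspan ▸ Submodule.mem_top : x ∈ kk ⊔ pp ⊔ pm))
    hkk_V₀ (fun c hc v hv => hv c hc) hkpp hpm_pp
  have hg'_filt := envFilt_eq_envFilt_of_triangular (X0 := annihilatedBy (pm : Set L))
    Set.inter_subset_left hg'_span (fun a ha => hkk_V₀ a ha.2) (fun c hc v hv => hv c hc.2)
    (fun a ha b hb => ⟨g'.lie_mem ha.1 hb.1, hkpp a ha.2 b hb.2⟩)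
    (fun c hc b hb => ⟨g'.lie_mem hc.1 hb.1, hpm_pp c hc.2 b hb.2⟩)
  intro n
  simp only [hg_filt, hg'_filt]
  exact envFilt_inf_iSup_envFilt_of_subset Set.inter_subset_right hadp hscal n

/-- Holomorphic pair setting: `g = k ⊕ p₊ ⊕ p₋` and a subalgebra
`g' ⊆ g` with `g' = (g'∩k) ⊕ (g'∩p₊) ⊕ (g'∩p₋)`, and `z' ∈ g' ∩ k` central in `k`, with
`ad(z') = ±1` on `p_±`.  If `V` is an irreducible `g`-module on which `z'` acts
semisimply, generated by `V₀ = V^{p₋}`, and `z'` acts on `V₀` by the scalar `a₀`, then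
`Uₙ(g)·V₀ ∩ U(g')·V₀ = Uₙ(g')·V₀` for all `n ≥ 0`. -/
theorem statement_14 {L V : Type*} [LieRing L] [LieAlgebra ℂ L]
    [AddCommGroup V] [Module ℂ V] [LieRingModule L V] [LieModule ℂ L V]
    (kk pp pm : Submodule ℂ L)
    (hdec : DirectSum.IsInternal (fun i : Fin 3 => ![kk, pp, pm] i))
    (hksub : ∀ x ∈ kk, ∀ y ∈ kk, ⁅x, y⁆ ∈ kk)
    (hkpp : ∀ x ∈ kk, ∀ y ∈ pp, ⁅x, y⁆ ∈ pp)
    (hkpm : ∀ x ∈ kk, ∀ y ∈ pm, ⁅x, y⁆ ∈ pm)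
    (g' : LieSubalgebra ℂ L)
    (hg'dec : g'.toSubmodule =
      g'.toSubmodule ⊓ kk ⊔ g'.toSubmodule ⊓ pp ⊔ g'.toSubmodule ⊓ pm)
    (z' : L) (hz'g' : z' ∈ g') (hz'k : z' ∈ kk)
    (hadk : ∀ x ∈ kk, ⁅z', x⁆ = 0)
    (hadp : ∀ x ∈ pp, ⁅z', x⁆ = x)
    (hadm : ∀ x ∈ pm, ⁅z', x⁆ = -x)
    (hVnt : Nontrivial V)
    (hVirr : ∀ U : Submodule ℂ V, (∀ x : L, ∀ v ∈ U, ⁅x, v⁆ ∈ U) → U = ⊥ ∨ U = ⊤)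
    (hss : ⨆ a : ℂ, (lieEig z' a : Submodule ℂ V) = ⊤)
    (hgen : ⨆ n : ℕ, envFilt (Set.univ : Set L)
        (annihilatedBy (pm : Set L) : Submodule ℂ V) n = ⊤)
    (a₀ : ℂ)
    (hscal : ∀ v ∈ (annihilatedBy (pm : Set L) : Submodule ℂ V), ⁅z', v⁆ = a₀ • v) :
    ∀ n : ℕ,
      envFilt (Set.univ : Set L) (annihilatedBy (pm : Set L) : Submodule ℂ V) n ⊓
          (⨆ m : ℕ, envFilt (g' : Set L) (annihilatedBy (pm : Set L) : Submodule ℂ V) m)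
        = envFilt (g' : Set L) (annihilatedBy (pm : Set L) : Submodule ℂ V) n :=
  statement_14_general kk pp pm hdec hkpp hkpm g' hg'dec z' hadk hadp hadm a₀ hscal
end
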